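/- arXiv:1311.3899 — 6 statements merged into one kernel-verified Lean document; each statement's English description precedes it below -/
import Mathlib

section
/- If Splitter wins the (ℓ, m, r)-splitter game on a graph G, then for every k ≥ 1, Splitter wins the (ℓ, k·m, r)-splitter game on the lexicographic product G • K_k. -/
/-- Vertices reachable from `v` by a walk of length at most `r` staying inside `A`
(the `r`-neighbourhood of `v` in the subgraph induced on `A`). -/
def ballIn {V : Type*} (G : SimpleGraph V) (A : Set V) (r : ℕ) (v : V) : Set V :=
  {w | ∃ p : G.Walk v w, p.length ≤ r ∧ ∀ x ∈ p.support, x ∈ A}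

/-- Splitter has a winning strategy in the `(ℓ, m, r)`-splitter game on the subgraph
of `G` induced on the vertex set `A`: either `A` is already empty, or for every move
`v` of Connector, Splitter can pick `W v ⊆ N_r(v)` with `|W v| ≤ m` and win the
remaining game with one round fewer on `N_r(v) \ W v`. -/
inductive SplitterWins {V : Type*} (G : SimpleGraph V) (m r : ℕ) : ℕ → Set V → Prop
  | empty (ℓ : ℕ) {A : Set V} : A = ∅ → SplitterWins G m r ℓ A
  | step (ℓ : ℕ) {A : Set V} (W : V → Finset V)
      (hsub : ∀ v ∈ A, ↑(W v) ⊆ ballIn G A r v)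
      (hcard : ∀ v ∈ A, (W v).card ≤ m)
      (hrec : ∀ v ∈ A, SplitterWins G m r ℓ (ballIn G A r v \ ↑(W v))) :
      SplitterWins G m r (ℓ + 1) A

/-- The lexicographic product of two simple graphs. -/
def lexProd {V W : Type*} (G : SimpleGraph V) (H : SimpleGraph W) :
    SimpleGraph (V × W) where
  Adj p q := G.Adj p.1 q.1 ∨ (p.1 = q.1 ∧ H.Adj p.2 q.2)
  symm := by
    constructor
    rintro p q (h | ⟨h1, h2⟩)
    · exact Or.inl h.symm
    · exact Or.inr ⟨h1.symm, h2.symm⟩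
  loopless := by
    constructor
    rintro p (h | ⟨_, h⟩)
    · exact G.loopless.irrefl _ h
    · exact H.loopless.irrefl _ h

/-!
Splitter plays the strategy for `G` on first coordinates: when Connector picks `(v, i)`,
Splitter answers with all vertices `(w, j)`, `w ∈ W v`, that lie in the ball — at most
`|H| * m` of them. A walk in `G • H` projects to a walk in `G` that is no longer, since
edges inside a fibre collapse, so every ball of `G • H` lies over the corresponding
ball of `G` and the game on the product stays inside the preimage of the game on `G`.
-/

section

variable {V : Type*} {G : SimpleGraph V} {m r : ℕ}

lemma ballIn_mono {A A' : Set V} (hA : A' ⊆ A) (v : V) :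
    ballIn G A' r v ⊆ ballIn G A r v := by
  rintro w ⟨p, hl, hs⟩
  exact ⟨p, hl, fun x hx => hA (hs x hx)⟩

lemma SplitterWins.step_of_card_le {ℓ : ℕ} {A : Set V} (W : V → Finset V)
    (hcard : ∀ v ∈ A, (W v).card ≤ m)
    (hrec : ∀ v ∈ A, SplitterWins G m r ℓ (ballIn G A r v \ ↑(W v))) :
    SplitterWins G m r (ℓ + 1) A := by
  classical
  refine .step ℓ (fun v => (W v).filter (· ∈ ballIn G A r v))
    (fun v _ x hx => (Finset.mem_filter.mp hx).2)
    (fun v hv => (Finset.card_filter_le _ _).trans (hcard v hv)) fun v hv => ?_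
  convert hrec v hv using 1
  ext x
  simp +contextual

lemma SplitterWins.mono {ℓ : ℕ} {A : Set V} (h : SplitterWins G m r ℓ A) :
    ∀ {A'}, A' ⊆ A → SplitterWins G m r ℓ A' := by
  induction h with
  | empty ℓ hA =>
    exact fun hA' => .empty ℓ (Set.subset_eq_empty hA' hA)
  | step ℓ W _ hcard _ ih =>
    intro A' hA'
    refine .step_of_card_le W (fun v hv => hcard v (hA' hv)) fun v hv => ih v (hA' hv) ?_
    exact Set.sdiff_subset_sdiff_left (ballIn_mono hA' v)

variable {U : Type*} {H : SimpleGraph U}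

lemma exists_walk_fst_of_lexProd_walk {a x : V × U} (p : (lexProd G H).Walk a x) :
    ∃ q : G.Walk a.1 x.1, q.length ≤ p.length ∧ q.support ⊆ p.support.map Prod.fst := by
  induction p with
  | nil => exact ⟨.nil, le_rfl, by simp⟩
  | @cons a u x hadj p ih =>
    obtain ⟨q, hql, hqs⟩ := ih
    simp only [SimpleGraph.Walk.length_cons, SimpleGraph.Walk.support_cons, List.map_cons]
    rcases hadj with hG | ⟨hfst, -⟩
    · exact ⟨.cons hG q, Nat.succ_le_succ hql, List.cons_subset_cons _ hqs⟩
    · exact ⟨q.copy hfst.symm rfl, by simpa using hql.trans p.length.le_succ,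
        by simpa using List.Subset.trans hqs (List.subset_cons_self _ _)⟩

lemma ballIn_lexProd_preimage_subset (B : Set V) (v : V × U) :
    ballIn (lexProd G H) (Prod.fst ⁻¹' B) r v ⊆ Prod.fst ⁻¹' ballIn G B r v.1 := by
  rintro x ⟨p, hl, hs⟩
  obtain ⟨q, hql, hqs⟩ := exists_walk_fst_of_lexProd_walk p
  refine ⟨q, hql.trans hl, fun z hz => ?_⟩
  obtain ⟨y, hy, rfl⟩ := List.mem_map.mp (hqs hz)
  exact hs y hy

lemma SplitterWins.lexProd_preimage [Fintype U] {ℓ : ℕ} {B : Set V}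
    (h : SplitterWins G m r ℓ B) :
    SplitterWins (lexProd G H) (Fintype.card U * m) r ℓ (Prod.fst ⁻¹' B) := by
  induction h with
  | empty ℓ hB => exact .empty ℓ (by simp [hB])
  | @step ℓ B W _ hcard _ ih =>
    refine .step_of_card_le (fun v => W v.1 ×ˢ Finset.univ) (fun v hv => ?_) fun v hv => ?_
    · rw [Finset.card_product, Finset.card_univ, mul_comm]
      exact Nat.mul_le_mul_left _ (hcard v.1 hv)
    · refine (ih v.1 hv).mono ?_
      rintro x ⟨hx, hxW⟩
      exact ⟨ballIn_lexProd_preimage_subset B v hx, fun hx1 => hxW (by simpa using hx1)⟩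

end

theorem splitterWins_lexProd_general {V : Type*} (G : SimpleGraph V) (ℓ m r k : ℕ)
    (h : SplitterWins G m r ℓ Set.univ) :
    SplitterWins (lexProd G (⊤ : SimpleGraph (Fin k))) (k * m) r ℓ Set.univ := by
  simpa using h.lexProd_preimage (H := (⊤ : SimpleGraph (Fin k)))

/-- If Splitter wins the (ℓ, m, r)-splitter game on G, then for every
k ≥ 1 Splitter wins the (ℓ, k·m, r)-splitter game on the lexicographic product
G • K_k. -/
theorem splitterWins_lexProd {V : Type*} (G : SimpleGraph V) (ℓ m r k : ℕ)
    (hk : 1 ≤ k) (h : SplitterWins G m r ℓ Set.univ) :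
    SplitterWins (lexProd G (⊤ : SimpleGraph (Fin k))) (k * m) r ℓ Set.univ :=
  splitterWins_lexProd_general G ℓ m r k h
end

section
/- If a class C of graphs is uniformly quasi-wide with margins s and N, then for every r > 0, Splitter wins the (ℓ, m, r)-splitter game on every graph G ∈ C, where ℓ = N(r, 2s(r)) and m = ℓ·(r+1). -/
open Finset

theorem card_le_two_mul_card_add_one_of_forall_exists_mem_Icc {α : Type*} [LinearOrder α]
    {K T : Finset α} (h : ∀ i ∈ K, ∀ j ∈ K, i < j → ∃ x ∈ T, x ∈ Set.Icc i j) :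
    #K ≤ 2 * #T + 1 := by
  induction T using Finset.induction_on_min generalizing K with
  | empty =>
    refine card_le_one.2 fun i hi j hj => ?_
    by_contra hne
    rcases lt_or_gt_of_ne hne with hij | hji
    · simpa using h i hi j hj hij
    · simpa using h j hj i hi hji
  | insert a T haT ih =>
    have hbelow : #(K.filter (· < a)) ≤ 1 := by
      have hnlt : ∀ i ∈ K.filter (· < a), ∀ j ∈ K.filter (· < a), ¬ i < j := by
        intro i hi j hj hij
        simp only [mem_filter] at hi hj
        obtain ⟨x, hx, -, hxj⟩ := h i hi.1 j hj.1 hij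
        rcases mem_insert.1 hx with rfl | hxT
        · exact not_lt.2 hxj hj.2
        · exact not_lt.2 (hxj.trans hj.2.le) (haT x hxT)
      exact card_le_one.2 fun i hi j hj =>
        le_antisymm (not_lt.1 (hnlt j hj i hi)) (not_lt.1 (hnlt i hi j hj))
    have habove : #(K.filter (a < ·)) ≤ 2 * #T + 1 := by
      refine ih fun i hi j hj hij => ?_
      simp only [mem_filter] at hi hj
      obtain ⟨x, hx, hxij⟩ := h i hi.1 j hj.1 hij
      rcases mem_insert.1 hx with rfl | hxT
      · exact absurd hxij.1 (not_le.2 hi.2)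
      · exact ⟨x, hxT, hxij⟩
    have hat : #(K.filter (· = a)) ≤ 1 :=
      card_le_one.2 fun i hi j hj => by simp only [mem_filter] at hi hj; rw [hi.2, hj.2]
    have hsplit : K ⊆ K.filter (· < a) ∪ K.filter (· = a) ∪ K.filter (a < ·) := by
      intro i hi
      rcases lt_trichotomy i a with hia | rfl | hai <;> simp [*]
    have haT' : a ∉ T := fun ha => lt_irrefl a (haT a ha)
    calc #K ≤ #(K.filter (· < a)) + #(K.filter (· = a)) + #(K.filter (a < ·)) :=
          (card_le_card hsplit).trans <| (card_union_le _ _).trans <|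
            Nat.add_le_add_right (card_union_le _ _) _
      _ ≤ 2 * #(insert a T) + 1 := by rw [card_insert_of_notMem haT']; omega

def IsUniformlyQuasiWide {V : Type*} (G : SimpleGraph V) (s : ℕ → ℕ) (N : ℕ → ℕ → ℕ) : Prop :=
  ∀ (r k : ℕ) (W : Finset V), N r k < W.card →
    ∃ S : Finset V, S.card < s r ∧
      ∃ I : Finset V, I ⊆ W ∧ k ≤ I.card ∧ (∀ x ∈ I, x ∉ S) ∧
        (↑I : Set V).Pairwise fun u w =>
          ¬ ∃ p : G.Walk u w, p.length ≤ 2 * r ∧ ∀ x ∈ p.support, x ∉ S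

lemma ballIn_subset {V : Type*} {G : SimpleGraph V} {A : Set V} {r : ℕ} {v : V} :
    ballIn G A r v ⊆ A := fun w ⟨p, _, h⟩ => h w p.end_mem_support

/-- The first `t` rounds of a play in which Connector chose `v i` in the arena `A i`, and
Splitter removed `v i` together with a path of length at most `r` from each earlier `v k`
to `v i`, leaving the arena `A (i + 1)`. For `i = j`, `exists_walk` says that `v i` itself was
removed. -/
structure PathCuttingPlay {V : Type*} (G : SimpleGraph V) (r t : ℕ) (v : ℕ → V)
    (A : ℕ → Set V) : Prop where
  subset_ballIn : ∀ i < t, A (i + 1) ⊆ ballIn G (A i) r (v i)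
  exists_walk : ∀ i j, i ≤ j → j < t → ∃ p : G.Walk (v i) (v j), p.length ≤ r ∧
    (∀ x ∈ p.support, x ∈ A i) ∧ ∀ x ∈ p.support, x ∉ A (j + 1)

namespace PathCuttingPlay

variable {V : Type*} {G : SimpleGraph V} {r t : ℕ} {v : ℕ → V} {A : ℕ → Set V}

lemma antitone (h : PathCuttingPlay G r t v A) {i j : ℕ} (hij : i ≤ j) (hjt : j ≤ t) :
    A j ⊆ A i := by
  induction j, hij using Nat.le_induction with
  | base => exact le_rfl
  | succ j hij ih => exact ((h.subset_ballIn j hjt).trans ballIn_subset).trans (ih (by omega))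

lemma mem (h : PathCuttingPlay G r t v A) {i : ℕ} (hi : i < t) : v i ∈ A i := by
  obtain ⟨p, -, hp, -⟩ := h.exists_walk i i le_rfl hi
  exact hp _ p.start_mem_support

lemma notMem_succ (h : PathCuttingPlay G r t v A) {i : ℕ} (hi : i < t) : v i ∉ A (i + 1) := by
  obtain ⟨p, -, -, hp⟩ := h.exists_walk i i le_rfl hi
  exact hp _ p.start_mem_support

lemma injOn (h : PathCuttingPlay G r t v A) : Set.InjOn v (Set.Iio t) := by
  have hne : ∀ i j, i < j → j < t → v i ≠ v j := fun i j hij hjt heq =>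
    h.notMem_succ (hij.trans hjt) (h.antitone hij hjt.le (heq ▸ h.mem hjt))
  intro i hi j hj hij
  by_contra hne'
  rcases lt_or_gt_of_ne hne' with hlt | hlt
  · exact hne i j hlt hj hij
  · exact hne j i hlt hi hij.symm

lemma exists_walk_of_mem (h : PathCuttingPlay G r t v A) {w : V} (hw : w ∈ A t) {i : ℕ}
    (hi : i < t) : ∃ p : G.Walk (v i) w, p.length ≤ r ∧ ∀ x ∈ p.support, x ∈ A i :=
  h.subset_ballIn i hi (h.antitone hi le_rfl hw)

lemma extend (h : PathCuttingPlay G r t v A) {w : V} (hw : w ∈ A t) {B : Set V}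
    (hB : B ⊆ ballIn G (A t) r w) (hwB : w ∉ B)
    (hcut : ∀ i < t, ∃ p : G.Walk (v i) w, p.length ≤ r ∧ (∀ x ∈ p.support, x ∈ A i) ∧
      ∀ x ∈ p.support, x ∉ B) :
    PathCuttingPlay G r (t + 1) (Function.update v t w) (Function.update A (t + 1) B) := by
  have hA : ∀ i ≤ t, Function.update A (t + 1) B i = A i := fun i hi =>
    Function.update_of_ne (by omega) _ _
  have hv : ∀ i < t, Function.update v t w i = v i := fun i hi =>
    Function.update_of_ne hi.ne _ _
  refine ⟨fun i hi => ?_, fun i j hij hj => ?_⟩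
  · rcases Nat.lt_succ_iff_lt_or_eq.1 hi with hi | rfl
    · rw [hA _ hi, hA _ hi.le, hv _ hi]
      exact h.subset_ballIn i hi
    · rw [Function.update_self, hA _ le_rfl, Function.update_self]
      exact hB
  rcases Nat.lt_succ_iff_lt_or_eq.1 hj with hj | rfl
  · rw [hv _ (hij.trans_lt hj), hv _ hj, hA _ (hij.trans hj.le), hA _ hj]
    exact h.exists_walk i j hij hj
  rw [Function.update_self, Function.update_self]
  rcases hij.lt_or_eq with hi | rfl
  · rw [hv _ hi, hA _ hi.le]
    exact hcut i hi
  · rw [Function.update_self, hA _ le_rfl]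
    exact ⟨.nil, by simp, by simpa using hw, by simpa using hwB⟩

lemma exists_extend (h : PathCuttingPlay G r t v A) {w : V} (hw : w ∈ A t) :
    ∃ W : Finset V, ↑W ⊆ ballIn G (A t) r w ∧ #W ≤ t * (r + 1) + 1 ∧
      PathCuttingPlay G r (t + 1) (Function.update v t w)
        (Function.update A (t + 1) (ballIn G (A t) r w \ ↑W)) := by
  classical
  choose p hplen hpA using fun (i : Fin t) => h.exists_walk_of_mem hw i.2
  set paths := insert w (univ.biUnion fun i => (p i).support.toFinset)
  have hcard : #paths ≤ t * (r + 1) + 1 := by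
    refine (card_insert_le _ _).trans (Nat.add_le_add_right ?_ 1)
    calc #(univ.biUnion fun i => (p i).support.toFinset)
        ≤ ∑ i : Fin t, #(p i).support.toFinset := card_biUnion_le
      _ ≤ ∑ _i : Fin t, (r + 1) := sum_le_sum fun i _ =>
          (List.toFinset_card_le _).trans
            (by rw [SimpleGraph.Walk.length_support]; exact Nat.add_le_add_right (hplen i) 1)
      _ = t * (r + 1) := by simp
  refine ⟨paths.filter (· ∈ ballIn G (A t) r w), fun x hx => (mem_filter.1 hx).2,
    (card_filter_le _ _).trans hcard, h.extend hw Set.sdiff_subset ?_ fun i hi => ?_⟩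
  · exact fun hwB => hwB.2 (mem_filter.2 ⟨mem_insert_self _ _, hwB.1⟩)
  · refine ⟨p ⟨i, hi⟩, hplen _, hpA _, fun x hx hxB => hxB.2 (mem_filter.2 ⟨?_, hxB.1⟩)⟩
    exact mem_insert_of_mem (mem_biUnion.2 ⟨⟨i, hi⟩, mem_univ _, List.mem_toFinset.2 hx⟩)

lemma le_of_isUniformlyQuasiWide {s : ℕ → ℕ} {N : ℕ → ℕ → ℕ} (hG : IsUniformlyQuasiWide G s N)
    (h : PathCuttingPlay G r t v A) : t ≤ N r (2 * s r) := by
  classical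
  by_contra! hlt
  obtain ⟨S, hS, I, hIW, hIcard, -, hscat⟩ := hG r (2 * s r) ((range t).image v) (by
    rwa [card_image_of_injOn (by simpa using h.injOn), card_range])
  set J := (range t).filter (v · ∈ I)
  have hJ : 2 * s r ≤ #J := by
    refine hIcard.trans ((card_le_card (t := J.image v) fun x hx => ?_).trans card_image_le)
    obtain ⟨i, hi, rfl⟩ := mem_image.1 (hIW hx)
    exact mem_image_of_mem _ (mem_filter.2 ⟨hi, hx⟩)
  -- the last arena still containing `x`
  set last : V → ℕ := fun x => Nat.findGreatest (x ∈ A ·) t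
  have hlast : ∀ x i j, i ≤ j → j < t → x ∈ A i → x ∉ A (j + 1) → last x ∈ Set.Icc i j :=
    fun x i j hij hjt hxi hxj => ⟨Nat.le_findGreatest (hij.trans hjt.le) hxi, not_lt.1 fun hlt =>
      hxj <| h.antitone hlt (Nat.findGreatest_le t) <|
        Nat.findGreatest_spec (P := (x ∈ A ·)) (hij.trans hjt.le) hxi⟩
  have hmeet : ∀ i ∈ J, ∀ j ∈ J, i < j → ∃ y ∈ S.image last, y ∈ Set.Icc i j := by
    intro i hi j hj hij
    simp only [J, mem_filter, mem_range] at hi hj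
    obtain ⟨p, hplen, hpA, hpA'⟩ := h.exists_walk i j hij.le hj.1
    have hne : v i ≠ v j := fun heq => hij.ne (h.injOn hi.1 hj.1 heq)
    obtain ⟨x, hxp, hxS⟩ : ∃ x ∈ p.support, x ∈ S := by
      by_contra! hp
      exact hscat hi.2 hj.2 hne ⟨p, by omega, hp⟩
    exact ⟨last x, mem_image_of_mem _ hxS, hlast x i j hij.le hj.1 (hpA x hxp) (hpA' x hxp)⟩
  have := card_le_two_mul_card_add_one_of_forall_exists_mem_Icc hmeet
  have := card_image_le (s := S) (f := last)
  omega

end PathCuttingPlay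

lemma splitterWins_of_pathCuttingPlay {V : Type*} {G : SimpleGraph V} {s : ℕ → ℕ}
    {N : ℕ → ℕ → ℕ} (hG : IsUniformlyQuasiWide G s N) {r : ℕ} (c : ℕ) {t : ℕ} {v : ℕ → V}
    {A : ℕ → Set V} (h : PathCuttingPlay G r t v A) (htc : t + c = N r (2 * s r)) :
    SplitterWins G (N r (2 * s r) * (r + 1)) r c (A t) := by
  induction c generalizing t v A with
  | zero =>
    refine .empty 0 (Set.eq_empty_of_forall_notMem fun w hw => ?_)
    obtain ⟨W, -, -, h'⟩ := h.exists_extend hw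
    have := h'.le_of_isUniformlyQuasiWide hG
    omega
  | succ c ih =>
    choose! W hWsub hWcard hWplay using fun w (hw : w ∈ A t) => h.exists_extend hw
    refine .step c W hWsub (fun w hw => (hWcard w hw).trans ?_) fun w hw => ?_
    · calc t * (r + 1) + 1 ≤ (t + 1) * (r + 1) := by rw [Nat.succ_mul]; omega
        _ ≤ N r (2 * s r) * (r + 1) := Nat.mul_le_mul_right _ (by omega)
    · simpa using ih (hWplay w hw) (by omega)

theorem uniformlyQuasiWide_splitterWins_general {V : Type*}
    (G : SimpleGraph V) (s : ℕ → ℕ) (N : ℕ → ℕ → ℕ)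
    (huqw : ∀ (r k : ℕ) (W : Finset V), N r k < W.card →
      ∃ S : Finset V, S.card < s r ∧
        ∃ I : Finset V, I ⊆ W ∧ k ≤ I.card ∧ (∀ x ∈ I, x ∉ S) ∧
          (↑I : Set V).Pairwise fun u w =>
            ¬ ∃ p : G.Walk u w, p.length ≤ 2 * r ∧ ∀ x ∈ p.support, x ∉ S)
    (r : ℕ) :
    SplitterWins G (N r (2 * s r) * (r + 1)) r (N r (2 * s r)) Set.univ := by
  rcases isEmpty_or_nonempty V with hV | ⟨⟨v₀⟩⟩
  · exact .empty _ (Set.univ_eq_empty_iff.2 hV)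
  have hstart : PathCuttingPlay G r 0 (fun _ => v₀) (fun _ => Set.univ) :=
    ⟨fun _ h => absurd h (Nat.not_lt_zero _), fun _ _ _ h => absurd h (Nat.not_lt_zero _)⟩
  exact splitterWins_of_pathCuttingPlay huqw _ hstart (zero_add _)

/-- If a graph satisfies the uniform quasi-wideness property with
margins s and N (for all radii and sizes), then for every r > 0 Splitter wins the
(ℓ, m, r)-splitter game on it, where ℓ = N(r, 2·s(r)) and m = ℓ·(r+1). -/
theorem uniformlyQuasiWide_splitterWins {V : Type*} [Fintype V] [DecidableEq V]
    (G : SimpleGraph V) (s : ℕ → ℕ) (N : ℕ → ℕ → ℕ)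
    (huqw : ∀ (r k : ℕ) (W : Finset V), N r k < W.card →
      ∃ S : Finset V, S.card < s r ∧
        ∃ I : Finset V, I ⊆ W ∧ k ≤ I.card ∧ (∀ x ∈ I, x ∉ S) ∧
          (↑I : Set V).Pairwise fun u w =>
            ¬ ∃ p : G.Walk u w, p.length ≤ 2 * r ∧ ∀ x ∈ p.support, x ∉ S)
    (r : ℕ) (hr : 0 < r) :
    SplitterWins G (N r (2 * s r) * (r + 1)) r (N r (2 * s r)) Set.univ :=
  uniformlyQuasiWide_splitterWins_general G s N huqw r
end

section
/- For every ℓ, m > 0, if a graph G contains the complete graph K_{ℓm+1} as a depth-r minor, then Connector wins the (ℓ, m, 4r+1)-splitter game on G. -/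
open SimpleGraph Finset

section Ball

variable {V : Type*} {G : SimpleGraph V} {A B : Set V} {r s : ℕ} {u v w : V}

lemma ballIn_mono_s8 (hAB : A ⊆ B) (hrs : r ≤ s) : ballIn G A r v ⊆ ballIn G B s v :=
  fun _ ⟨p, hp, hpA⟩ ↦ ⟨p, hp.trans hrs, fun x hx ↦ hAB (hpA x hx)⟩

lemma mem_ballIn_comm (h : w ∈ ballIn G A r v) : v ∈ ballIn G A r w := by
  obtain ⟨p, hp, hpA⟩ := h
  refine ⟨p.reverse, by rwa [Walk.length_reverse], fun x hx ↦ hpA x ?_⟩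
  rwa [Walk.support_reverse, List.mem_reverse] at hx

lemma mem_ballIn_trans (hv : v ∈ ballIn G A r u) (hw : w ∈ ballIn G A s v) :
    w ∈ ballIn G A (r + s) u := by
  obtain ⟨p, hp, hpA⟩ := hv
  obtain ⟨q, hq, hqA⟩ := hw
  refine ⟨p.append q, by rw [Walk.length_append]; omega, fun x hx ↦ ?_⟩
  rcases (Walk.mem_support_append_iff p q).1 hx with hx | hx
  exacts [hpA x hx, hqA x hx]

lemma mem_ballIn_one_of_adj (hu : u ∈ A) (hv : v ∈ A) (huv : G.Adj u v) :
    v ∈ ballIn G A 1 u :=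
  ⟨Walk.cons huv Walk.nil, le_rfl, by simp [hu, hv]⟩

end Ball

structure IsCliqueDepthMinorIn {V ι : Type*} (G : SimpleGraph V) (A : Set V) (r : ℕ)
    (T : ι → Set V) (I : Finset ι) : Prop where
  subset : ∀ i ∈ I, T i ⊆ A
  pairwiseDisjoint : (I : Set ι).PairwiseDisjoint T
  radius : ∀ i ∈ I, ∃ c ∈ T i, T i ⊆ ballIn G (T i) r c
  adj : ∀ i ∈ I, ∀ j ∈ I, i ≠ j → ∃ a ∈ T i, ∃ b ∈ T j, G.Adj a b

namespace IsCliqueDepthMinorIn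

variable {V ι : Type*} {G : SimpleGraph V} {A : Set V} {r : ℕ} {T : ι → Set V} {I : Finset ι}

lemma restrict (hT : IsCliqueDepthMinorIn G A r T I) {A' : Set V} {I' : Finset ι}
    (hI : I' ⊆ I) (hA : ∀ i ∈ I', T i ⊆ A') : IsCliqueDepthMinorIn G A' r T I' where
  subset := hA
  pairwiseDisjoint := hT.pairwiseDisjoint.subset (by exact_mod_cast hI)
  radius i hi := hT.radius i (hI hi)
  adj i hi j hj := hT.adj i (hI hi) j (hI hj)

lemma mem_ballIn_of_mem (hT : IsCliqueDepthMinorIn G A r T I) {i j : ι} (hi : i ∈ I)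
    (hj : j ∈ I) {x y : V} (hx : x ∈ T i) (hy : y ∈ T j) :
    y ∈ ballIn G A (4 * r + 1) x := by
  obtain ⟨c, -, hc⟩ := hT.radius i hi
  obtain ⟨d, hd, hd'⟩ := hT.radius j hj
  have within_branch {k : ι} (hk : k ∈ I) {c z : V} (hz : z ∈ ballIn G (T k) r c) :
      z ∈ ballIn G A r c :=
    ballIn_mono_s8 (hT.subset k hk) le_rfl hz
  have hxc : c ∈ ballIn G A r x := mem_ballIn_comm (within_branch hi (hc hx))
  have hdy : y ∈ ballIn G A r d := within_branch hj (hd' hy)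
  have hcd : d ∈ ballIn G A (r + 1 + r) c := by
    by_cases hij : i = j
    · subst hij
      exact ballIn_mono_s8 le_rfl (by omega) (within_branch hi (hc hd))
    · obtain ⟨a, ha, b, hb, hab⟩ := hT.adj i hi j hj hij
      have hab' := mem_ballIn_one_of_adj (hT.subset i hi ha) (hT.subset j hj hb) hab
      exact mem_ballIn_trans (mem_ballIn_trans (within_branch hi (hc ha)) hab')
        (mem_ballIn_comm (within_branch hj (hd' hb)))
  exact ballIn_mono_s8 le_rfl (by omega) (mem_ballIn_trans (mem_ballIn_trans hxc hcd) hdy)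

end IsCliqueDepthMinorIn

lemma card_filter_not_disjoint_le {ι α : Type*} {I : Finset ι} {T : ι → Set α}
    (hT : (I : Set ι).PairwiseDisjoint T) (W : Finset α)
    [DecidablePred fun j ↦ Disjoint (T j) W] :
    #{j ∈ I | ¬ Disjoint (T j) W} ≤ #W := by
  refine card_le_card_of_forall_subsingleton (fun j x ↦ x ∈ T j) (fun j hj ↦ ?_)
    (fun x _ j hj k hk ↦ ?_)
  · obtain ⟨x, hxT, hxW⟩ := Set.not_disjoint_iff.1 (mem_filter.1 hj).2
    exact ⟨x, hxW, hxT⟩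
  · by_contra hjk
    exact Set.disjoint_left.1 (hT (mem_filter.1 hj.1).1 (mem_filter.1 hk.1).1 hjk) hj.2 hk.2

theorem not_splitterWins_of_isCliqueDepthMinorIn {V ι : Type*} {G : SimpleGraph V}
    {A : Set V} {n m r : ℕ} {T : ι → Set V} {I : Finset ι}
    (hT : IsCliqueDepthMinorIn G A r T I) (hI : n * m < #I) :
    ¬ SplitterWins G m (4 * r + 1) n A := by
  classical
  intro h
  induction h generalizing I with
  | empty _ hA =>
    obtain ⟨i, hi⟩ := card_pos.1 (by omega : 0 < #I)
    obtain ⟨c, hc, -⟩ := hT.radius i hi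
    simpa [hA] using hT.subset i hi hc
  | @step k A W _ hcard _ ih =>
    obtain ⟨i, hi⟩ := card_pos.1 (by omega : 0 < #I)
    obtain ⟨c, hc, -⟩ := hT.radius i hi
    have hhit : #{j ∈ I | ¬ Disjoint (T j) (W c)} ≤ m :=
      (card_filter_not_disjoint_le hT.pairwiseDisjoint (W c)).trans
        (hcard c (hT.subset i hi hc))
    have hsplit := card_filter_add_card_filter_not (s := I) (fun j ↦ Disjoint (T j) (W c))
    have hsurvive : k * m < #{j ∈ I | Disjoint (T j) (W c)} := by
      rw [add_one_mul] at hI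
      omega
    refine ih c (hT.subset i hi hc)
      (hT.restrict (filter_subset _ I) fun j hj y hy ↦ ⟨?_, ?_⟩) hsurvive
    · exact hT.mem_ballIn_of_mem hi (mem_filter.1 hj).1 hc hy
    · exact Set.disjoint_left.1 (mem_filter.1 hj).2 hy

theorem depth_minor_connector_wins_general {V : Type*} (G : SimpleGraph V) (ℓ m r : ℕ)
    (T : Fin (ℓ * m + 1) → Set V)
    (hdisj : ∀ i j, i ≠ j → Disjoint (T i) (T j))
    (hrad : ∀ i, ∃ c ∈ T i, ∀ w ∈ T i,
      ∃ p : G.Walk c w, p.length ≤ r ∧ ∀ x ∈ p.support, x ∈ T i)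
    (hedge : ∀ i j, i ≠ j → ∃ a ∈ T i, ∃ b ∈ T j, G.Adj a b) :
    ¬ SplitterWins G m (4 * r + 1) ℓ Set.univ :=
  not_splitterWins_of_isCliqueDepthMinorIn (I := univ)
    { subset := fun _ _ ↦ Set.subset_univ _
      pairwiseDisjoint := fun i _ j _ hij ↦ hdisj i j hij
      radius := fun i _ ↦ hrad i
      adj := fun i _ j _ hij ↦ hedge i j hij }
    (by simp)

/-- If G contains the complete graph on ℓ·m + 1 vertices as a depth-r
minor (witnessed by pairwise disjoint branch sets of radius at most r, with an edge
of G between every two branch sets), then Connector wins the (ℓ, m, 4r+1)-splitter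
game on G, i.e. Splitter does not win it. -/
theorem depth_minor_connector_wins {V : Type*} (G : SimpleGraph V) (ℓ m r : ℕ)
    (hl : 0 < ℓ) (hm : 0 < m) (T : Fin (ℓ * m + 1) → Set V)
    (hdisj : ∀ i j, i ≠ j → Disjoint (T i) (T j))
    (hrad : ∀ i, ∃ c ∈ T i, ∀ w ∈ T i,
      ∃ p : G.Walk c w, p.length ≤ r ∧ ∀ x ∈ p.support, x ∈ T i)
    (hedge : ∀ i j, i ≠ j → ∃ a ∈ T i, ∃ b ∈ T j, G.Adj a b) :
    ¬ SplitterWins G m (4 * r + 1) ℓ Set.univ :=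
  depth_minor_connector_wins_general G ℓ m r T hdisj hrad hedge
end

section
/- Let G be a graph, let < be a linear order on V(G), and let r > 0. Suppose that for every vertex v, |wreach_{2r}[G, <, v]| ≤ s. Then the family X = { X_{2r}[G,<,v] : v ∈ V(G) }, where X_{2r}[G,<,v] = { w : v ∈ wreach_{2r}[G,<,w] }, is an r-neighbourhood cover of G of radius at most 2r and maximum degree at most s. -/
/-- `wreach G k v`: the set consisting of `v` and all vertices `u < v` that are
weakly `k`-accessible from `v`, i.e. joined to `v` by a path of length at most `k`
all of whose vertices are `≥ u`. -/
def wreach {V : Type*} [LinearOrder V] (G : SimpleGraph V) (k : ℕ) (v : V) : Set V :=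
  {u | u = v ∨ (u < v ∧ ∃ p : G.Walk u v, p.length ≤ k ∧ ∀ x ∈ p.support, u ≤ x)}

/-- `Xset G k v = { w : v ∈ wreach G k w }`. -/
def Xset {V : Type*} [LinearOrder V] (G : SimpleGraph V) (k : ℕ) (v : V) : Set V :=
  {w | v ∈ wreach G k w}

/-!
Take as centre for the `r`-ball around `v` its least vertex `u`. Any `w` in the ball is joined
to `u` through `v` by a walk of length at most `2r` that stays inside the ball, hence above `u`;
so `u` is weakly `2r`-reachable from `w`. Prefixes of a walk witnessing `u ∈ wreach w` witness
the same for every vertex on it, which gives the radius bound, and the clusters containing `v`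
are indexed by `wreach v` itself, which gives the degree bound.
-/

open SimpleGraph

lemma SimpleGraph.exists_walk_forall_edist_le_of_edist_le {V : Type*} {G : SimpleGraph V}
    {v w : V} {r : ℕ} (h : G.edist v w ≤ r) :
    ∃ p : G.Walk v w, p.length ≤ r ∧ ∀ x ∈ p.support, G.edist v x ≤ r := by
  classical
  obtain ⟨p, hp⟩ := exists_walk_of_edist_ne_top (ne_top_of_le_ne_top (ENat.natCast_ne_top r) h)
  have hlen : (p.length : ℕ∞) ≤ r := hp ▸ h
  refine ⟨p, mod_cast hlen, fun x hx => ?_⟩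
  calc G.edist v x ≤ (p.takeUntil x hx).length := edist_le _
    _ ≤ p.length := mod_cast p.length_takeUntil_le_length hx
    _ ≤ r := hlen

section
variable {V : Type*} [LinearOrder V] {G : SimpleGraph V} {k : ℕ} {u v w : V}

lemma mem_wreach_iff :
    u ∈ wreach G k v ↔ ∃ p : G.Walk u v, p.length ≤ k ∧ ∀ x ∈ p.support, u ≤ x := by
  constructor
  · rintro (rfl | ⟨-, p, hp⟩)
    · exact ⟨.nil, by simp, by simp⟩
    · exact ⟨p, hp⟩
  · rintro ⟨p, hlen, hmin⟩
    rcases (hmin v p.end_mem_support).eq_or_lt with rfl | hlt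
    · exact Or.inl rfl
    · exact Or.inr ⟨hlt, p, hlen, hmin⟩

lemma exists_walk_forall_mem_Xset (hw : w ∈ Xset G k u) :
    ∃ p : G.Walk u w, p.length ≤ k ∧ ∀ x ∈ p.support, x ∈ Xset G k u := by
  obtain ⟨p, hlen, hmin⟩ := mem_wreach_iff.1 hw
  refine ⟨p, hlen, fun x hx => mem_wreach_iff.2 ⟨p.takeUntil x hx, ?_, fun y hy => ?_⟩⟩
  · exact (p.length_takeUntil_le_length hx).trans hlen
  · exact hmin y (p.support_takeUntil_subset_support hx hy)

lemma edist_le_subset_Xset_of_isLeast {r : ℕ} (hu : IsLeast {w | G.edist v w ≤ r} u) :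
    {w | G.edist v w ≤ r} ⊆ Xset G (2 * r) u := by
  intro w hw
  obtain ⟨p, hp, hpball⟩ := exists_walk_forall_edist_le_of_edist_le hu.1
  obtain ⟨q, hq, hqball⟩ := exists_walk_forall_edist_le_of_edist_le hw
  refine mem_wreach_iff.2 ⟨p.reverse.append q, ?_, fun x hx => ?_⟩
  · rw [Walk.length_append, Walk.length_reverse]
    omega
  · rcases (Walk.mem_support_append_iff _ _).1 hx with hx | hx
    · exact hu.2 (hpball x (by simpa using hx))
    · exact hu.2 (hqball x hx)

end

theorem wreach_neighbourhood_cover_general {V : Type*} [Fintype V] [LinearOrder V]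
    (G : SimpleGraph V) (r s : ℕ)
    (h : ∀ v, (wreach G (2 * r) v).ncard ≤ s) :
    (∀ v : V, ∃ u : V, {w | G.edist v w ≤ (r : ℕ∞)} ⊆ Xset G (2 * r) u) ∧
    (∀ u : V, ∀ w ∈ Xset G (2 * r) u,
      ∃ p : G.Walk u w, p.length ≤ 2 * r ∧ ∀ x ∈ p.support, x ∈ Xset G (2 * r) u) ∧
    (∀ v : V, {u | v ∈ Xset G (2 * r) u}.ncard ≤ s) := by
  refine ⟨fun v => ?_, fun u w => exists_walk_forall_mem_Xset, h⟩
  obtain ⟨u, hu, hmin⟩ := Set.exists_min_image {w | G.edist v w ≤ (r : ℕ∞)} id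
    (Set.toFinite _) ⟨v, by simp⟩
  exact ⟨u, edist_le_subset_Xset_of_isLeast ⟨hu, fun x hx => hmin x hx⟩⟩

/-- If `|wreach_{2r}[G,<,v]| ≤ s` for every vertex `v`, then the
family `{X_{2r}[G,<,v] : v ∈ V(G)}` is an `r`-neighbourhood cover of `G` of radius
at most `2r` and maximum degree at most `s`: every `r`-neighbourhood is contained
in some cluster, every cluster has a centre within distance `2r` (inside the
cluster) of all its members, and every vertex lies in at most `s` clusters. -/
theorem wreach_neighbourhood_cover {V : Type*} [Fintype V] [LinearOrder V]
    (G : SimpleGraph V) (r s : ℕ) (hr : 0 < r)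
    (h : ∀ v, (wreach G (2 * r) v).ncard ≤ s) :
    (∀ v : V, ∃ u : V, {w | G.edist v w ≤ (r : ℕ∞)} ⊆ Xset G (2 * r) u) ∧
    (∀ u : V, ∀ w ∈ Xset G (2 * r) u,
      ∃ p : G.Walk u w, p.length ≤ 2 * r ∧ ∀ x ∈ p.support, x ∈ Xset G (2 * r) u) ∧
    (∀ v : V, {u | v ∈ Xset G (2 * r) u}.ncard ≤ s) :=
  wreach_neighbourhood_cover_general G r s h
end

section
/- Let G⃗ be a directed graph, r ∈ ℕ, and let H⃗ be an r-transitive fraternal augmentation of G⃗. Let v, w be vertices joined in the underlying undirected graph G by a path v = v_1, v_2, …, v_l = w of length at most r. Then (v,w) ∈ E(H⃗), or (w,v) ∈ E(H⃗), or there is some vertex v_i on the path with (v_i, v), (v_i, w) ∈ E(H⃗). -/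
/-!
Induction on `r`, peeling off the first edge `v x` of the walk. The induction hypothesis for
the rest of the walk links `x` and `w` in the previous augmentation `H'`; transitivity and
fraternity of the last augmentation step combine this with the arc between `v` and `x`. The only
case that needs more is a common in-neighbour `z ≠ v, w` of `x` and `w` with `v → x`: then the
induction hypothesis is applied a second time, to the part of the walk from `v` to `z`, which is
shorter because `z ≠ w`.
-/

/-- `IsTFA D H`: `H` is a (tight) 1-transitive fraternal augmentation of the
directed graph `D`: it contains all arcs of `D`, is transitive over `D`
(if `(u,w),(w,v)` are arcs of `D` then `(u,v)` is an arc of `H`) and fraternal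
over `D` (if `(u,w),(v,w)` are arcs of `D` with `u ≠ v` then `(u,v)` or `(v,u)`
is an arc of `H`). -/
def IsTFA {V : Type*} (D H : V → V → Prop) : Prop :=
  (∀ u v, D u v → H u v) ∧
  (∀ u w v, D u w → D w v → H u v) ∧
  (∀ u v w, u ≠ v → D u w → D v w → H u v ∨ H v u)

/-- `IsAug D r H`: `H` is an `r`-transitive fraternal augmentation of `D`,
obtained by iterating tight 1-transitive fraternal augmentations `r` times. -/
inductive IsAug {V : Type*} (D : V → V → Prop) : ℕ → (V → V → Prop) → Prop
  | zero : IsAug D 0 D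
  | succ {n : ℕ} {H H' : V → V → Prop} :
      IsAug D n H → IsTFA H H' → IsAug D (n + 1) H'

section

open SimpleGraph

variable {V : Type*}

def LinkedThrough (H : V → V → Prop) (S : List V) (v w : V) : Prop :=
  H v w ∨ H w v ∨ ∃ u ∈ S, H u v ∧ H u w

theorem LinkedThrough.mono {H : V → V → Prop} {S T : List V} {v w : V} (hST : S ⊆ T)
    (h : LinkedThrough H S v w) : LinkedThrough H T v w := by
  rcases h with h | h | ⟨u, hu, huv, huw⟩
  exacts [Or.inl h, Or.inr (Or.inl h), Or.inr (Or.inr ⟨u, hST hu, huv, huw⟩)]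

theorem IsAug.le {D H : V → V → Prop} {r : ℕ} (h : IsAug D r H) (a b : V) (hab : D a b) :
    H a b := by
  induction h with
  | zero => exact hab
  | succ _ htfa ih => exact htfa.1 a b ih

namespace IsTFA

variable {H' H : V → V → Prop} {S L : List V} {v w x : V}

theorem linkedThrough_cons (htfa : IsTFA H' H) (hvx : LinkedThrough H' S v x) (hxw : H' x w) :
    LinkedThrough H (x :: S) v w := by
  obtain ⟨hsub, htrans, -⟩ := htfa
  rcases hvx with hvx | hxv | ⟨u, hu, huv, hux⟩
  · exact Or.inl (htrans v x w hvx hxw)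
  · exact Or.inr (Or.inr ⟨x, List.mem_cons_self, hsub x v hxv, hsub x w hxw⟩)
  · exact Or.inr (Or.inr ⟨u, List.mem_cons_of_mem x hu, hsub u v huv, htrans u x w hux hxw⟩)

/-- `hprefix` stands for the induction hypothesis applied to the walk from `v` to `z`. -/
theorem linkedThrough_of_adj (htfa : IsTFA H' H) (hvw : v ≠ w) (hvx : H' v x ∨ H' x v)
    (hx : x ∈ L) (hSL : S ⊆ L) (hxw : LinkedThrough H' S x w)
    (hprefix : ∀ z ∈ S, z ≠ v → z ≠ w → LinkedThrough H' L v z) :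
    LinkedThrough H L v w := by
  have ⟨hsub, htrans, hfrat⟩ := htfa
  rcases hxw with hxw | hwx | ⟨z, hz, hzx, hzw⟩
  · exact (htfa.linkedThrough_cons (S := []) (hvx.imp_right Or.inl) hxw).mono (by simpa using hx)
  · rcases hvx with hvx | hxv
    · exact (hfrat v w x hvw hvx hwx).imp_right Or.inl
    · exact Or.inr (Or.inl (htrans w x v hwx hxv))
  rcases hvx.symm with hxv | hvx
  · exact Or.inr (Or.inr ⟨z, hSL hz, htrans z x v hzx hxv, hsub z w hzw⟩)
  obtain rfl | hzv := eq_or_ne z v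
  · exact Or.inl (hsub z w hzw)
  obtain rfl | hzw' := eq_or_ne z w
  · exact (hfrat v z x hvw hvx hzx).imp_right Or.inl
  exact (htfa.linkedThrough_cons (hprefix z hz hzv hzw') hzw).mono
    (List.cons_subset.2 ⟨hSL hz, List.Subset.refl L⟩)

end IsTFA

theorem IsAug.linkedThrough_support {G : SimpleGraph V} {D H : V → V → Prop} {r : ℕ}
    (hD : ∀ u v, G.Adj u v → D u v ∨ D v u) (haug : IsAug D r H) {v w : V} (hvw : v ≠ w)
    (p : G.Walk v w) (hlen : p.length ≤ r) : LinkedThrough H p.support v w := by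
  classical
  induction haug generalizing v w with
  | zero => exact absurd (Walk.eq_of_length_eq_zero (Nat.le_zero.1 hlen)) hvw
  | @succ n H' H haug' htfa ih =>
    cases p with
    | nil => exact absurd rfl hvw
    | @cons _ x _ hadj q =>
      have hvx : H' v x ∨ H' x v := (hD v x hadj).imp (haug'.le v x) (haug'.le x v)
      obtain rfl | hxw := eq_or_ne x w
      · exact hvx.imp (htfa.1 v x) (fun h => Or.inl (htfa.1 x v h))
      refine htfa.linkedThrough_of_adj hvw hvx (by simp) (List.subset_cons_self _ _)
        (ih hxw q (by simpa using hlen)) fun z hz hzv hzw => ?_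
      have hzp : z ∈ (q.cons hadj).support := List.mem_cons_of_mem v hz
      have hshort := Walk.length_takeUntil_lt_length hzp hzw
      exact (ih hzv.symm _ (by omega)).mono (Walk.support_takeUntil_subset_support _ hzp)

end

theorem aug_path_property_general {V : Type*} (G : SimpleGraph V) (D H : V → V → Prop)
    (r : ℕ) (horient : ∀ u v, G.Adj u v ↔ (D u v ∨ D v u))
    (haug : IsAug D r H)
    (v w : V) (hvw : v ≠ w) (p : G.Walk v w) (hlen : p.length ≤ r) :
    H v w ∨ H w v ∨ ∃ u ∈ p.support, H u v ∧ H u w :=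
  haug.linkedThrough_support (fun u v => (horient u v).1) hvw p hlen

/-- Let `H` be an `r`-transitive fraternal augmentation of an
orientation `D` of a graph `G`, and let `v, w` be distinct vertices joined in `G`
by a path of length at most `r`. Then `(v,w)` is an arc of `H`, or `(w,v)` is an
arc of `H`, or some vertex `u` on the path has arcs `(u,v)` and `(u,w)` in `H`. -/
theorem aug_path_property {V : Type*} (G : SimpleGraph V) (D H : V → V → Prop)
    (r : ℕ) (horient : ∀ u v, G.Adj u v ↔ (D u v ∨ D v u))
    (hnd : ∀ u v, ¬ (D u v ∧ D v u)) (haug : IsAug D r H)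
    (v w : V) (hvw : v ≠ w) (p : G.Walk v w) (hlen : p.length ≤ r) :
    H v w ∨ H w v ∨ ∃ u ∈ p.support, H u v ∧ H u w :=
  aug_path_property_general G D H r horient haug v w hvw p hlen
end

section
/- For structures A, B and tuples a ∈ V(A)^k, b ∈ V(B)^k: if (A, a) and (B, b) satisfy the same FO⁺ formulas of q-rank at most ℓ, then for all i, j ∈ [k], either dist^A(a_i, a_j) = dist^B(b_i, b_j), or both distances exceed f_q(ℓ) = (4q)^{q+ℓ}. -/
open FirstOrder FirstOrder.Language

/-- The Gaifman graph of an `L`-structure: two distinct elements are adjacent if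
they occur together in a tuple of some relation. -/
def gaifman (L : Language) (M : Type*) [L.Structure M] : SimpleGraph M where
  Adj a b := a ≠ b ∧ ∃ (n : ℕ) (R : L.Relations n) (t : Fin n → M),
    Structure.RelMap R t ∧ (∃ i, t i = a) ∧ (∃ j, t j = b)
  symm := by
    constructor
    rintro a b ⟨hab, n, R, t, hR, hi, hj⟩
    exact ⟨hab.symm, n, R, t, hR, hj, hi⟩
  loopless := by constructor; rintro a ⟨h, -⟩; exact h rfl

/-- Syntax of the logic FO⁺: first-order logic over `L` with free variables among
`Fin n`, extended by atomic distance formulas `dist(x,y) ≤ d`. -/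
inductive FOp (L : Language) : ℕ → Type _
  | eq {n : ℕ} (i j : Fin n) : FOp L n
  | rel {n l : ℕ} (R : L.Relations l) (t : Fin l → Fin n) : FOp L n
  | distLe {n : ℕ} (i j : Fin n) (d : ℕ) : FOp L n
  | not {n : ℕ} (φ : FOp L n) : FOp L n
  | or {n : ℕ} (φ ψ : FOp L n) : FOp L n
  | ex {n : ℕ} (φ : FOp L (n + 1)) : FOp L n

/-- Semantics of FO⁺; distance atoms are interpreted via Gaifman-graph distance. -/
def FOp.Realize {L : Language} {M : Type*} [L.Structure M] :
    ∀ {n : ℕ}, FOp L n → (Fin n → M) → Prop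
  | _, .eq i j, a => a i = a j
  | _, .rel R t, a => Structure.RelMap R (fun l => a (t l))
  | _, .distLe i j d, a => (gaifman L M).edist (a i) (a j) ≤ (d : ℕ∞)
  | _, .not φ, a => ¬ φ.Realize a
  | _, .or φ ψ, a => φ.Realize a ∨ ψ.Realize a
  | _, .ex φ, a => ∃ x : M, φ.Realize (Fin.snoc a x)

/-- `φ.QRankLe q ℓ`: the formula `φ` has `q`-rank at most `ℓ`: its quantifier rank
is at most `ℓ` and every distance atom `dist(x,y) ≤ d` occurring in the scope of
`i` quantifiers satisfies `d ≤ (4q)^(q+ℓ-i)`. -/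
def FOp.QRankLe {L : Language} (q : ℕ) : ℕ → ∀ {n : ℕ}, FOp L n → Prop
  | _, _, .eq _ _ => True
  | _, _, .rel _ _ => True
  | ℓ, _, .distLe _ _ d => d ≤ (4 * q) ^ (q + ℓ)
  | ℓ, _, .not φ => φ.QRankLe q ℓ
  | ℓ, _, .or φ ψ => φ.QRankLe q ℓ ∧ ψ.QRankLe q ℓ
  | 0, _, .ex _ => False
  | (ℓ + 1), _, .ex φ => φ.QRankLe q ℓ

/-- `(A,a) ≡⁺_{q,ℓ} (B,b)`: the tuples satisfy the same FO⁺ formulas of `q`-rank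
at most `ℓ`. -/
def EquivPlus {L : Language} (q ℓ : ℕ) {M N : Type*} [L.Structure M] [L.Structure N]
    {k : ℕ} (a : Fin k → M) (b : Fin k → N) : Prop :=
  ∀ φ : FOp L k, φ.QRankLe q ℓ → (φ.Realize a ↔ φ.Realize b)

/- Distance atoms are FO⁺ formulas of quantifier rank 0, so `≡⁺_{q,ℓ}` decides every threshold
`dist(a i, a j) ≤ d` with `d ≤ f_q(ℓ)` alike on both sides; two extended naturals with the same
answers to all these thresholds are equal or both exceed `f_q(ℓ)`. -/

theorem ENat.eq_or_lt_and_lt_of_forall_le_iff {x y : ℕ∞} {f : ℕ}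
    (h : ∀ d : ℕ, d ≤ f → (x ≤ d ↔ y ≤ d)) : x = y ∨ ((f : ℕ∞) < x ∧ (f : ℕ∞) < y) := by
  by_cases hx : x ≤ f
  · have hy : y ≤ f := (h f le_rfl).mp hx
    left
    obtain ⟨m, rfl⟩ := ENat.ne_top_iff_exists.mp (ne_top_of_le_ne_top (ENat.natCast_ne_top f) hx)
    obtain ⟨n, rfl⟩ := ENat.ne_top_iff_exists.mp (ne_top_of_le_ne_top (ENat.natCast_ne_top f) hy)
    have hm : m ≤ f := by exact_mod_cast hx
    have hn : n ≤ f := by exact_mod_cast hy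
    exact le_antisymm ((h n hn).mpr le_rfl) ((h m hm).mp le_rfl)
  · exact Or.inr ⟨not_le.mp hx, not_le.mp fun hy => hx ((h f le_rfl).mpr hy)⟩

theorem FOp.qRankLe_distLe {L : Language} {n : ℕ} (q ℓ : ℕ) (i j : Fin n) (d : ℕ) :
    (FOp.distLe i j d : FOp L n).QRankLe q ℓ ↔ d ≤ (4 * q) ^ (q + ℓ) := by
  cases ℓ <;> rfl

theorem EquivPlus.edist_le_iff {L : Language} {M N : Type*} [L.Structure M] [L.Structure N]
    {k q ℓ : ℕ} {a : Fin k → M} {b : Fin k → N} (h : EquivPlus (L := L) q ℓ a b)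
    (i j : Fin k) {d : ℕ} (hd : d ≤ (4 * q) ^ (q + ℓ)) :
    (gaifman L M).edist (a i) (a j) ≤ d ↔ (gaifman L N).edist (b i) (b j) ≤ d :=
  h (.distLe i j d) ((FOp.qRankLe_distLe q ℓ i j d).mpr hd)

/-- If `(A,a)` and `(B,b)` satisfy the same FO⁺ formulas of `q`-rank
at most `ℓ`, then for all `i, j`, either the Gaifman distances of `(a i, a j)` and
`(b i, b j)` agree, or both exceed `f_q(ℓ) = (4q)^(q+ℓ)`. -/
theorem equivPlus_dist {L : Language} {M N : Type*} [L.Structure M] [L.Structure N]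
    {k q ℓ : ℕ} (a : Fin k → M) (b : Fin k → N)
    (h : EquivPlus (L := L) q ℓ a b) (i j : Fin k) :
    (gaifman L M).edist (a i) (a j) = (gaifman L N).edist (b i) (b j) ∨
    ((((4 * q) ^ (q + ℓ) : ℕ) : ℕ∞) < (gaifman L M).edist (a i) (a j) ∧
     (((4 * q) ^ (q + ℓ) : ℕ) : ℕ∞) < (gaifman L N).edist (b i) (b j)) :=
  ENat.eq_or_lt_and_lt_of_forall_le_iff fun _ hd => h.edist_le_iff i j hd
end
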